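/- (The all-office strategy is the only safe strategy.) Let s = (s_1, s_2) be a strategy profile such that (a) s_i(k) = o for every i ∈ {1,2} and every integer k with N ≤ k ≤ kmax (both players go to the office when arriving at 9:00 or after), and (b) s never miscoordinates: s_1(t1) = s_2(t2) for every arrival pair (t1, t2) ∈ T. Then s_i(k) = o for every i ∈ {1,2} and every integer k with kmin ≤ k ≤ kmax, i.e., both players go to the office at every possible arrival time. -/

import Mathlib

/-- The two actions: `c` (canteen) and `o` (office). -/
inductive Act : Type
  | c : Act
  | o : Act
deriving DecidableEq

open Act

/-- The set of arrival pairs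
`T = {(k, k+1) : kmin ≤ k ≤ kmax - 1} ∪ {(k, k-1) : kmin + 1 ≤ k ≤ kmax}`. -/
noncomputable def T (kmin kmax : ℤ) : Finset (ℤ × ℤ) :=
  ((Finset.Icc kmin (kmax - 1)).image (fun k => (k, k + 1))) ∪
  ((Finset.Icc (kmin + 1) kmax).image (fun k => (k, k - 1)))

/-- Subgame `T1 = {(t1,t2) ∈ T : t1 ≡ kmin (mod 2)}`. -/
noncomputable def T1 (kmin kmax : ℤ) : Finset (ℤ × ℤ) :=
  (T kmin kmax).filter (fun t => t.1 % 2 = kmin % 2)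

/-- Subgame `T2 = {(t1,t2) ∈ T : t2 ≡ kmin (mod 2)}`. -/
noncomputable def T2 (kmin kmax : ℤ) : Finset (ℤ × ℤ) :=
  (T kmin kmax).filter (fun t => t.2 % 2 = kmin % 2)

/-- The expected utility of profile `s` over a set `S` of arrival pairs:
`EU_S(s) = (1/|S|) · Σ_{(t1,t2) ∈ S} u_{(t1,t2)}(s_1(t1), s_2(t2))`. -/
noncomputable def EU (u : ℤ × ℤ → Act → Act → ℝ) (s : (ℤ → Act) × (ℤ → Act))
    (S : Finset (ℤ × ℤ)) : ℝ :=
  (∑ t ∈ S, u t (s.1 t.1) (s.2 t.2)) / S.card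

/-- `s` is Pareto optimal over `S` if no profile `s'` has `EU_S(s') > EU_S(s)`. -/
def ParetoOptimal (u : ℤ × ℤ → Act → Act → ℝ) (S : Finset (ℤ × ℤ))
    (s : (ℤ → Act) × (ℤ → Act)) : Prop :=
  ¬ ∃ s' : (ℤ → Act) × (ℤ → Act), EU u s' S > EU u s S

/-- `u` satisfies conditions (U1) and (U2) on the arrival pairs of `T`. -/
def SatisfiesU1U2 (kmin kmax N : ℤ) (u : ℤ × ℤ → Act → Act → ℝ) : Prop :=
  ∀ t ∈ T kmin kmax,
    (t.1 < N ∧ t.2 < N →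
      u t c c > u t o o ∧ u t o o > u t c o ∧ u t c o = u t o c) ∧
    (N ≤ t.1 ∨ N ≤ t.2 →
      u t o o > u t c o ∧ u t c o = u t o c ∧ u t o c = u t c c)

/-- `u` is uniform with values `A > B > C` (the order is assumed separately). -/
def Uniform (kmin kmax N : ℤ) (u : ℤ × ℤ → Act → Act → ℝ) (A B C : ℝ) : Prop :=
  ∀ t ∈ T kmin kmax,
    (t.1 < N ∧ t.2 < N →
      u t c c = A ∧ u t o o = B ∧ u t c o = C ∧ u t o c = C) ∧
    (N ≤ t.1 ∨ N ≤ t.2 →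
      u t o o = B ∧ u t c c = C ∧ u t c o = C ∧ u t o c = C)

/-- The cut-off strategy with cut-off `m`: canteen iff arriving strictly before `m`. -/
def cutoff (m : ℤ) : ℤ → Act := fun k => if k < m then c else o

/-- The all-office strategy. -/
def allOffice : ℤ → Act := fun _ => o

section NeverMiscoordinates

variable {kmin kmax k : ℤ}

theorem pred_pair_mem_T (hk : kmin < k) (hk' : k ≤ kmax) : (k - 1, k) ∈ T kmin kmax :=
  Finset.mem_union_left _ <| Finset.mem_image.2 ⟨k - 1, Finset.mem_Icc.2 ⟨by omega, by omega⟩, by simp⟩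

theorem pair_pred_mem_T (hk : kmin < k) (hk' : k ≤ kmax) : (k, k - 1) ∈ T kmin kmax :=
  Finset.mem_union_right _ <| Finset.mem_image.2 ⟨k, Finset.mem_Icc.2 ⟨by omega, hk'⟩, rfl⟩

variable {s : (ℤ → Act) × (ℤ → Act)}

theorem office_pred_of_office (hs : ∀ t ∈ T kmin kmax, s.1 t.1 = s.2 t.2)
    (hk : kmin < k) (hk' : k ≤ kmax) (ho : s.1 k = o ∧ s.2 k = o) :
    s.1 (k - 1) = o ∧ s.2 (k - 1) = o :=
  ⟨(hs _ (pred_pair_mem_T hk hk')).trans ho.2, (hs _ (pair_pred_mem_T hk hk')).symm.trans ho.1⟩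

theorem office_of_le_of_office {m : ℤ} (hs : ∀ t ∈ T kmin kmax, s.1 t.1 = s.2 t.2)
    (hm : m ≤ kmax) (ho : s.1 m = o ∧ s.2 m = o) :
    ∀ k, kmin ≤ k → k ≤ m → s.1 k = o ∧ s.2 k = o := by
  intro k hk hkm
  induction k, hkm using Int.leInductionDown with
  | base => exact ho
  | pred n hnm ih => exact office_pred_of_office hs (by omega) (hnm.trans hm) (ih (by omega))

end NeverMiscoordinates

theorem stmt_4_general (kmin kmax N : ℤ) (h2 : N ≤ kmax)
    (s : (ℤ → Act) × (ℤ → Act))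
    (ha : ∀ k : ℤ, N ≤ k → k ≤ kmax → s.1 k = Act.o ∧ s.2 k = Act.o)
    (hb : ∀ t ∈ T kmin kmax, s.1 t.1 = s.2 t.2) :
    ∀ k : ℤ, kmin ≤ k → k ≤ kmax → s.1 k = Act.o ∧ s.2 k = Act.o := by
  intro k hk hk'
  rcases le_or_gt N k with hNk | hkN
  · exact ha k hNk hk'
  · exact office_of_le_of_office hb h2 (ha N le_rfl h2) k hk hkN.le

/-- The all-office strategy is the only safe strategy. -/
theorem stmt_4 (kmin kmax N : ℤ) (h1 : kmin < N) (h2 : N ≤ kmax)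
    (s : (ℤ → Act) × (ℤ → Act))
    (ha : ∀ k : ℤ, N ≤ k → k ≤ kmax → s.1 k = Act.o ∧ s.2 k = Act.o)
    (hb : ∀ t ∈ T kmin kmax, s.1 t.1 = s.2 t.2) :
    ∀ k : ℤ, kmin ≤ k → k ≤ kmax → s.1 k = Act.o ∧ s.2 k = Act.o :=
  stmt_4_general kmin kmax N h2 s ha hb
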